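/- Let N ≥ 1 be an integer, σ² > 0, and let S be a 2×2 Hermitian positive semidefinite complex matrix with largest eigenvalue η₁ and (E₁, E₂) ∈ ℂ² a unit eigenvector of S for η₁ with E₁ ≠ 0. For F ∈ ℂ and v ≥ 0, let C(F, v) = [[v + σ², v·conj(F)], [v·F, v·|F|² + σ²]] and define the likelihood p(F, v) = det(π·C(F, v))^(−N) · exp(−N·Re(Tr(S·C(F, v)⁻¹))). Then F̂ = E₂/E₁ and v̂ = |E₁|²·max{η₁ − σ², 0} satisfy p(F̂, v̂) ≥ p(F, v) for all F ∈ ℂ and all v ≥ 0. -/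

import Mathlib

open Complex Matrix Real
open scoped ComplexOrder

/-!
Write `w = (1, F)`, so that `C(F, v) = σ²·I + v·w wᴴ`. The matrix determinant lemma and the
Sherman–Morrison formula give `−log p(F, v) / N = const + log L − v·q / (σ² L)` with
`L = σ² + v‖w‖²` and `q = Re (wᴴ S w)`. Since `η₁·I − S` is positive semidefinite,
`q ≤ η₁‖w‖²`, so this is at least `log L + η₁/L − η₁/σ²`, and `L ↦ log L + η₁/L` is minimal on
`[σ², ∞)` at `L = max η₁ σ²`. Both bounds are attained at `(F̂, v̂)`: `(1, F̂)` is an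
`η₁`-eigenvector of `S`, and `σ² + v̂‖(1, F̂)‖² = max η₁ σ²`.
-/

theorem log_add_div_le_log_add_div {η x y : ℝ} (hx : 0 < x) (hy : 0 < y)
    (h : (x - y) * (x - η) ≤ 0) : Real.log x + η / x ≤ Real.log y + η / y := by
  have hlog : Real.log x - Real.log y ≤ x / y - 1 := by
    rw [← Real.log_div hx.ne' hy.ne']
    exact Real.log_le_sub_one_of_pos (div_pos hx hy)
  have hdiff : x / y - 1 - (η / y - η / x) = (x - y) * (x - η) / (x * y) := by
    field_simp
  have : (x - y) * (x - η) / (x * y) ≤ 0 := div_nonpos_of_nonpos_of_nonneg h (by positivity)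
  linarith

/-- Up to an additive constant, `−log p(F, v) / N` when `r = ‖w‖²` and `q = Re (wᴴ S w)`. -/
noncomputable def reducedNegLogLik (σ v r q : ℝ) : ℝ :=
  Real.log (σ + v * r) - v * q / (σ * (σ + v * r))

theorem reducedNegLogLik_ge {σ η v r q : ℝ} (hσ : 0 < σ) (hv : 0 ≤ v) (hr : 0 ≤ r)
    (hq : q ≤ η * r) :
    Real.log (max η σ) + η / max η σ - η / σ ≤ reducedNegLogLik σ v r q := by
  have hL : σ ≤ σ + v * r := le_add_of_nonneg_right (by positivity)
  have hL0 : 0 < σ + v * r := by positivity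
  have hquad : v * q / (σ * (σ + v * r)) ≤ η / σ - η / (σ + v * r) := by
    rw [div_sub_div _ _ hσ.ne' hL0.ne', div_le_div_iff_of_pos_right (by positivity)]
    nlinarith [mul_le_mul_of_nonneg_left hq hv]
  have hmin : Real.log (max η σ) + η / max η σ ≤ Real.log (σ + v * r) + η / (σ + v * r) := by
    refine log_add_div_le_log_add_div (by positivity) (by positivity) ?_
    rcases le_total η σ with h | h
    · rw [max_eq_right h]
      exact mul_nonpos_of_nonpos_of_nonneg (by linarith) (by linarith)
    · rw [max_eq_left h, sub_self, mul_zero]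
  unfold reducedNegLogLik
  linarith

theorem reducedNegLogLik_eq {σ η v r : ℝ} (hσ : 0 < σ) (hvr : v * r = max (η - σ) 0) :
    reducedNegLogLik σ v r (η * r) = Real.log (max η σ) + η / max η σ - η / σ := by
  have hL : σ + v * r = max η σ := by
    rw [hvr, ← sub_self σ, max_sub_sub_right, add_sub_cancel]
  have hL0 : 0 < max η σ := lt_max_of_lt_right hσ
  rw [reducedNegLogLik, hL, show v * (η * r) = η * (max η σ - σ) by rw [← hL]; ring]
  field_simp
  ring

section ShermanMorrison

variable {K n : Type*} [Field K] [Fintype n] [DecidableEq n]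

theorem det_smul_one_add_vecMulVec {σ : K} (hσ : σ ≠ 0) (u w : n → K) :
    det (σ • 1 + vecMulVec u w) = σ ^ Fintype.card n * (1 + w ⬝ᵥ u / σ) := by
  have : σ • (1 : Matrix n n K) + vecMulVec u w = σ • (1 + vecMulVec (σ⁻¹ • u) w) := by
    rw [smul_add, smul_vecMulVec, smul_inv_smul₀ hσ]
  rw [this, det_smul, vecMulVec_eq Unit, det_one_add_replicateCol_mul_replicateRow,
    dotProduct_smul, smul_eq_mul, div_eq_inv_mul]

theorem inv_smul_one_add_vecMulVec {σ : K} (hσ : σ ≠ 0) {u w : n → K}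
    (hd : σ + w ⬝ᵥ u ≠ 0) :
    (σ • 1 + vecMulVec u w)⁻¹ = σ⁻¹ • (1 - (σ + w ⬝ᵥ u)⁻¹ • vecMulVec u w) := by
  refine inv_eq_right_inv ?_
  have hsq : vecMulVec u w * vecMulVec u w = (w ⬝ᵥ u) • vecMulVec u w := by
    rw [vecMulVec_mul_vecMulVec, vecMulVec_smul]
  have hσ' : σ⁻¹ * σ = 1 := inv_mul_cancel₀ hσ
  have hd' : (σ + w ⬝ᵥ u)⁻¹ * (σ + w ⬝ᵥ u) = 1 := inv_mul_cancel₀ hd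
  rw [Matrix.mul_smul, mul_sub, mul_one, Matrix.mul_smul, add_mul, smul_mul, one_mul, hsq]
  linear_combination (norm := module) hσ' • (1 : Matrix n n K) - (σ⁻¹ * hd') • vecMulVec u w

theorem trace_mul_inv_smul_one_add_vecMulVec (S : Matrix n n K) {σ : K} (hσ : σ ≠ 0)
    {u w : n → K} (hd : σ + w ⬝ᵥ u ≠ 0) :
    trace (S * (σ • 1 + vecMulVec u w)⁻¹) = σ⁻¹ * (trace S - w ⬝ᵥ (S *ᵥ u) / (σ + w ⬝ᵥ u)) := by
  rw [inv_smul_one_add_vecMulVec hσ hd, Matrix.mul_smul, mul_sub, mul_one, Matrix.mul_smul,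
    mul_vecMulVec, trace_smul, trace_sub, trace_smul, trace_vecMulVec, dotProduct_comm (S *ᵥ u),
    smul_eq_mul, smul_eq_mul, div_eq_inv_mul]

end ShermanMorrison

section Likelihood

variable {n : Type*} [Fintype n] [DecidableEq n]

theorem likelihood_eq_mul_exp (N : ℕ) {σ v r : ℝ} (hσ : 0 < σ) (hv : 0 ≤ v) (hr0 : 0 ≤ r)
    (S : Matrix n n ℂ) {w : n → ℂ} (hr : star w ⬝ᵥ w = r) {M : Matrix n n ℂ}
    (hM : M = (σ : ℂ) • 1 + vecMulVec ((v : ℂ) • w) (star w)) :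
    ((π : ℂ) • M).det.re ^ (-(N : ℤ)) * Real.exp (-(N : ℝ) * (S * M⁻¹).trace.re) =
      ((π * σ) ^ Fintype.card n / σ) ^ (-(N : ℤ)) * Real.exp (-(N : ℝ) * (S.trace.re / σ)) *
        Real.exp (-(N : ℝ) * reducedNegLogLik σ v r (star w ⬝ᵥ S *ᵥ w).re) := by
  have hL : 0 < σ + v * r := by positivity
  have hσ' : (σ : ℂ) ≠ 0 := ofReal_ne_zero.mpr hσ.ne'
  have hd : (σ : ℂ) + star w ⬝ᵥ ((v : ℂ) • w) = ((σ + v * r : ℝ) : ℂ) := by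
    rw [dotProduct_smul, hr, smul_eq_mul]; push_cast; ring
  have hd' : (σ : ℂ) + star w ⬝ᵥ ((v : ℂ) • w) ≠ 0 := by
    rw [hd]; exact ofReal_ne_zero.mpr hL.ne'
  have hdet : ((π : ℂ) • M).det = (((π * σ) ^ Fintype.card n / σ * (σ + v * r) : ℝ) : ℂ) := by
    rw [hM, det_smul, det_smul_one_add_vecMulVec hσ', one_add_div hσ', hd]
    push_cast
    ring
  have htr : (S * M⁻¹).trace
      = ((σ⁻¹ : ℝ) : ℂ) * (S.trace - ((v / (σ + v * r) : ℝ) : ℂ) * (star w ⬝ᵥ S *ᵥ w)) := by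
    rw [hM, trace_mul_inv_smul_one_add_vecMulVec S hσ' hd', hd, mulVec_smul, dotProduct_smul,
      smul_eq_mul]
    push_cast
    ring
  have hpow : (σ + v * r) ^ (-(N : ℤ)) = Real.exp (-(N : ℝ) * Real.log (σ + v * r)) := by
    rw [_root_.zpow_neg, zpow_natCast, neg_mul, Real.exp_neg, Real.exp_nat_mul, Real.exp_log hL]
  rw [hdet, ofReal_re, htr, re_ofReal_mul, sub_re, re_ofReal_mul, mul_zpow, hpow, mul_assoc,
    mul_assoc, ← Real.exp_add, ← Real.exp_add, reducedNegLogLik]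
  congr 2
  field_simp
  ring

theorem posSemidef_smul_one_sub_of_eigenvalues_le {S : Matrix n n ℂ} (hS : S.IsHermitian) {η : ℝ}
    (hmax : ∀ t : ℝ, (∃ x : n → ℂ, x ≠ 0 ∧ S *ᵥ x = (t : ℂ) • x) → t ≤ η) :
    ((η : ℂ) • 1 - S).PosSemidef := by
  have hH : ((η : ℂ) • 1 - S).IsHermitian := by
    simpa [IsHermitian, conjTranspose_sub, conjTranspose_smul] using hS.eq
  refine hH.posSemidef_iff_eigenvalues_nonneg.mpr fun i => ?_
  have hx : ⇑(hH.eigenvectorBasis i) ≠ 0 := fun h =>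
    hH.eigenvectorBasis.orthonormal.ne_zero i (by ext j; exact congrFun h j)
  have hSx : S *ᵥ ⇑(hH.eigenvectorBasis i)
      = ((η - hH.eigenvalues i : ℝ) : ℂ) • ⇑(hH.eigenvectorBasis i) := by
    have := hH.mulVec_eigenvectorBasis i
    rw [sub_mulVec, smul_mulVec, one_mulVec, RCLike.real_smul_eq_coe_smul (K := ℂ)] at this
    rw [ofReal_sub, sub_smul]
    linear_combination (norm := module) -this
  have := hmax _ ⟨_, hx, hSx⟩
  show 0 ≤ hH.eigenvalues i
  linarith

theorem re_star_dotProduct_mulVec_le {S : Matrix n n ℂ} (hS : S.IsHermitian) {η : ℝ}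
    (hmax : ∀ t : ℝ, (∃ x : n → ℂ, x ≠ 0 ∧ S *ᵥ x = (t : ℂ) • x) → t ≤ η) (x : n → ℂ) :
    (star x ⬝ᵥ S *ᵥ x).re ≤ η * (star x ⬝ᵥ x).re := by
  have := (posSemidef_smul_one_sub_of_eigenvalues_le hS hmax).re_dotProduct_nonneg x
  rw [sub_mulVec, smul_mulVec, one_mulVec, dotProduct_sub, dotProduct_smul, RCLike.re_to_complex,
    sub_re, smul_eq_mul, re_ofReal_mul] at this
  linarith

end Likelihood

theorem re_star_dotProduct_mulVec_of_mulVec_eq_smul {n : Type*} [Fintype n] {S : Matrix n n ℂ} {η : ℝ}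
    {x : n → ℂ} (hx : S *ᵥ x = (η : ℂ) • x) :
    (star x ⬝ᵥ S *ᵥ x).re = η * (star x ⬝ᵥ x).re := by
  rw [hx, dotProduct_smul, smul_eq_mul, re_ofReal_mul]

theorem star_dotProduct_vecCons_one (F : ℂ) :
    star ![1, F] ⬝ᵥ ![1, F] = ((1 + ‖F‖ ^ 2 : ℝ) : ℂ) := by
  simp [dotProduct, Fin.sum_univ_two, mul_comm, mul_conj']

theorem covariance_eq_smul_one_add_vecMulVec (σ v : ℝ) (F : ℂ) :
    !![(v : ℂ) + σ, (v : ℂ) * (starRingEnd ℂ) F; (v : ℂ) * F, (v : ℂ) * (‖F‖ : ℂ) ^ 2 + σ] =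
      (σ : ℂ) • 1 + vecMulVec ((v : ℂ) • ![1, F]) (star ![1, F]) := by
  ext i j
  fin_cases i <;> fin_cases j <;>
    simp [vecMulVec_apply, -cons_vecMulVec, mul_conj', mul_assoc, add_comm]

theorem mulVec_vecCons_one_div {S : Matrix (Fin 2) (Fin 2) ℂ} {η : ℂ} {E₁ E₂ : ℂ} (hE₁ : E₁ ≠ 0)
    (hev : S *ᵥ ![E₁, E₂] = η • ![E₁, E₂]) :
    S *ᵥ ![1, E₂ / E₁] = η • ![1, E₂ / E₁] := by
  have : ![1, E₂ / E₁] = E₁⁻¹ • ![E₁, E₂] := by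
    ext j; fin_cases j <;> simp [inv_mul_cancel₀ hE₁, div_eq_inv_mul]
  rw [this, mulVec_smul, hev, smul_comm]

theorem norm_sq_mul_one_add_norm_div_sq {𝕜 : Type*} [NormedField 𝕜] {a : 𝕜} (ha : a ≠ 0)
    (b : 𝕜) : ‖a‖ ^ 2 * (1 + ‖b / a‖ ^ 2) = ‖a‖ ^ 2 + ‖b‖ ^ 2 := by
  have : ‖a‖ ≠ 0 := norm_ne_zero_iff.mpr ha
  rw [norm_div]
  field_simp

theorem stmt5_general (N : ℕ) (σ2 : ℝ) (hσ : 0 < σ2)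
    (S : Matrix (Fin 2) (Fin 2) ℂ) (hS : S.PosSemidef)
    (η₁ : ℝ)
    (hmax : ∀ t : ℝ, (∃ x : Fin 2 → ℂ, x ≠ 0 ∧ S.mulVec x = ((t : ℝ) : ℂ) • x) → t ≤ η₁)
    (E₁ E₂ : ℂ) (hE₁ : E₁ ≠ 0)
    (hunit : ‖E₁‖ ^ 2 + ‖E₂‖ ^ 2 = 1)
    (hev : S.mulVec ![E₁, E₂] = ((η₁ : ℝ) : ℂ) • ![E₁, E₂])
    (C : ℂ → ℝ → Matrix (Fin 2) (Fin 2) ℂ)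
    (hC : ∀ F v, C F v = !![(v : ℂ) + σ2, (v : ℂ) * (starRingEnd ℂ) F;
                 (v : ℂ) * F, (v : ℂ) * (‖F‖ : ℂ) ^ 2 + σ2])
    (p : ℂ → ℝ → ℝ)
    (hp : ∀ F v, p F v = (((π : ℂ) • C F v).det.re) ^ (-(N : ℤ))
        * Real.exp (-(N : ℝ) * ((S * (C F v)⁻¹).trace).re)) :
    ∀ F : ℂ, ∀ v : ℝ, 0 ≤ v →
      p F v ≤ p (E₂ / E₁) (‖E₁‖ ^ 2 * max (η₁ - σ2) 0) := by
  intro F v hv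
  have hlik : ∀ G u, 0 ≤ u → p G u = ((π * σ2) ^ 2 / σ2) ^ (-(N : ℤ)) *
      Real.exp (-(N : ℝ) * (S.trace.re / σ2)) * Real.exp (-(N : ℝ) *
        reducedNegLogLik σ2 u (1 + ‖G‖ ^ 2) (star ![1, G] ⬝ᵥ S *ᵥ ![1, G]).re) :=
    fun G u hu => by
      rw [hp]
      exact likelihood_eq_mul_exp N hσ hu (by positivity) S (star_dotProduct_vecCons_one G)
        (by rw [hC, covariance_eq_smul_one_add_vecMulVec])
  have hq : (star ![1, F] ⬝ᵥ S *ᵥ ![1, F]).re ≤ η₁ * (1 + ‖F‖ ^ 2) := by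
    have := re_star_dotProduct_mulVec_le hS.isHermitian hmax ![1, F]
    rwa [star_dotProduct_vecCons_one, ofReal_re] at this
  have hq_hat : (star ![1, E₂ / E₁] ⬝ᵥ S *ᵥ ![1, E₂ / E₁]).re = η₁ * (1 + ‖E₂ / E₁‖ ^ 2) := by
    rw [re_star_dotProduct_mulVec_of_mulVec_eq_smul (mulVec_vecCons_one_div hE₁ hev),
      star_dotProduct_vecCons_one, ofReal_re]
  have hv_hat : ‖E₁‖ ^ 2 * max (η₁ - σ2) 0 * (1 + ‖E₂ / E₁‖ ^ 2) = max (η₁ - σ2) 0 := by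
    rw [mul_right_comm, norm_sq_mul_one_add_norm_div_sq hE₁, hunit, one_mul]
  rw [hlik F v hv, hlik _ _ (by positivity)]
  refine mul_le_mul_of_nonneg_left (exp_le_exp.mpr (mul_le_mul_of_nonpos_left ?_ (by simp)))
    (by positivity)
  calc _ = Real.log (max η₁ σ2) + η₁ / max η₁ σ2 - η₁ / σ2 := by
        rw [hq_hat]; exact reducedNegLogLik_eq hσ hv_hat
    _ ≤ _ := reducedNegLogLik_ge hσ hv (by positivity) hq

/-- Single-packet ML estimators: let S be a 2×2 Hermitian PSD matrix
with largest eigenvalue η₁ and unit eigenvector (E₁, E₂) with E₁ ≠ 0, and for F ∈ ℂ,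
v ≥ 0 let C(F,v) = [[v+σ², v·conj F],[v·F, v·|F|²+σ²]] and
p(F,v) = det(π·C(F,v))^(−N)·exp(−N·Re Tr(S·C(F,v)⁻¹)).  Then F̂ = E₂/E₁ and
v̂ = |E₁|²·max{η₁−σ², 0} maximize p over all F ∈ ℂ and v ≥ 0. -/
theorem stmt5 (N : ℕ) (hN : 1 ≤ N) (σ2 : ℝ) (hσ : 0 < σ2)
    (S : Matrix (Fin 2) (Fin 2) ℂ) (hS : S.PosSemidef)
    (η₁ : ℝ)
    (hmax : ∀ t : ℝ, (∃ x : Fin 2 → ℂ, x ≠ 0 ∧ S.mulVec x = ((t : ℝ) : ℂ) • x) → t ≤ η₁)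
    (E₁ E₂ : ℂ) (hE₁ : E₁ ≠ 0)
    (hunit : ‖E₁‖ ^ 2 + ‖E₂‖ ^ 2 = 1)
    (hev : S.mulVec ![E₁, E₂] = ((η₁ : ℝ) : ℂ) • ![E₁, E₂])
    (C : ℂ → ℝ → Matrix (Fin 2) (Fin 2) ℂ)
    (hC : ∀ F v, C F v = !![(v : ℂ) + σ2, (v : ℂ) * (starRingEnd ℂ) F;
                 (v : ℂ) * F, (v : ℂ) * (‖F‖ : ℂ) ^ 2 + σ2])
    (p : ℂ → ℝ → ℝ)
    (hp : ∀ F v, p F v = (((π : ℂ) • C F v).det.re) ^ (-(N : ℤ))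
        * Real.exp (-(N : ℝ) * ((S * (C F v)⁻¹).trace).re)) :
    ∀ F : ℂ, ∀ v : ℝ, 0 ≤ v →
      p F v ≤ p (E₂ / E₁) (‖E₁‖ ^ 2 * max (η₁ - σ2) 0) :=
  stmt5_general N σ2 hσ S hS η₁ hmax E₁ E₂ hE₁ hunit hev C hC p hp
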